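/- Let P > 0 and p ∈ [0, 1]. Define f(t_I, t_II) := (1 + P) − ln(2·(1 + P)) + (p·t_I + (1−p)·t_II)·P/(1 + P) − p·√(1 + 4·P·t_I) − (1−p)·√(1 + 4·P·t_II) + p·ln(1 + √(1 + 4·P·t_I)) + (1−p)·ln(1 + √(1 + 4·P·t_II)). Then f(t_I, t_II) ≥ 0 for all t_I, t_II ≥ 0. Moreover, if p ∈ (0, 1), then f(t_I, t_II) = 0 if and only if t_I = t_II = 1 + P. -/

import Mathlib

/-!
The exponent is the `p`-average of the exponent of a single power shell evaluated at `t_I` and at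
`t_II`, so it suffices to treat one shell. With `s = √(1 + 4Pt)` and `u = (1 + s) / (2(1 + P))`,
the single-shell exponent equals `(1 + P)(u - 1)² - (u - 1) + log u`. Since `log u > 1 - 1/u`
for `u ≠ 1` and `(1 + P)(u - 1)² - (u - 1) + 1 - 1/u = ((1 + P)u - 1)(u - 1)²/u` with
`(1 + P)u = (1 + s)/2 ≥ 1`, this is positive unless `u = 1`, that is unless `t = 1 + P`.
-/

/-- The exponent `f₁ − f₂` arising in the ratio of the output density induced
by a composite shell codeword to the i.i.d. Gaussian output density
`N(0, (1+P)·I)`, as a function of the normalized output energies `t_I, t_II`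
on the two sub-blocks, with blocklength ratio `p`. -/
noncomputable def compositeShellExponent (P p tI tII : ℝ) : ℝ :=
  (1 + P) - Real.log (2 * (1 + P)) + (p * tI + (1 - p) * tII) * P / (1 + P) -
    p * Real.sqrt (1 + 4 * P * tI) - (1 - p) * Real.sqrt (1 + 4 * P * tII) +
    p * Real.log (1 + Real.sqrt (1 + 4 * P * tI)) +
    (1 - p) * Real.log (1 + Real.sqrt (1 + 4 * P * tII))

open Real

lemma sub_one_sub_mul_sq_lt_log {a u : ℝ} (hu : 0 < u) (hau : 1 ≤ a * u) (hu1 : u ≠ 1) :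
    u - 1 - a * (u - 1) ^ 2 < log u := by
  have hlog : 1 - u⁻¹ < log u := by
    have := log_lt_sub_one_of_pos (inv_pos.mpr hu) (inv_ne_one.mpr hu1)
    rw [log_inv] at this
    linarith
  have hquad : 0 ≤ a * (u - 1) ^ 2 - (u - 1) + (1 - u⁻¹) := by
    have : a * (u - 1) ^ 2 - (u - 1) + (1 - u⁻¹) = (a * u - 1) * (u - 1) ^ 2 / u := by
      field_simp
      ring
    rw [this]
    exact div_nonneg (mul_nonneg (by linarith) (sq_nonneg _)) hu.le
  linarith

noncomputable def shellExponent (P t : ℝ) : ℝ :=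
  (1 + P) - log (2 * (1 + P)) + t * P / (1 + P) - √(1 + 4 * P * t) + log (1 + √(1 + 4 * P * t))

lemma compositeShellExponent_eq (P p tI tII : ℝ) :
    compositeShellExponent P p tI tII = p * shellExponent P tI + (1 - p) * shellExponent P tII := by
  unfold compositeShellExponent shellExponent
  ring

lemma shellExponent_eq {P t : ℝ} (hP : 1 + P ≠ 0) (ht : 0 ≤ 1 + 4 * P * t) :
    let u := (1 + √(1 + 4 * P * t)) / (2 * (1 + P))
    shellExponent P t = (1 + P) * (u - 1) ^ 2 - (u - 1) + log u := by
  intro u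
  have hs : 0 ≤ √(1 + 4 * P * t) := sqrt_nonneg _
  have hlog : log (1 + √(1 + 4 * P * t)) = log u + log (2 * (1 + P)) := by
    rw [← log_mul (div_ne_zero (by positivity) (by simpa)) (by simpa), div_mul_cancel₀ _ (by simpa)]
  unfold shellExponent
  rw [hlog]
  simp only [u]
  have hsq := sq_sqrt ht
  generalize √(1 + 4 * P * t) = s at hsq ⊢
  field_simp
  linear_combination (-1) * hsq

lemma shellExponent_one_add {P : ℝ} (hP : 0 ≤ 1 + 2 * P) : shellExponent P (1 + P) = 0 := by
  have hs : √(1 + 4 * P * (1 + P)) = 1 + 2 * P := by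
    rw [show 1 + 4 * P * (1 + P) = (1 + 2 * P) ^ 2 by ring, sqrt_sq hP]
  have hP' : 1 + P ≠ 0 := by linarith
  unfold shellExponent
  rw [hs, show 1 + (1 + 2 * P) = 2 * (1 + P) by ring, mul_div_cancel_left₀ _ hP']
  ring

lemma shellExponent_pos {P t : ℝ} (hP : 0 < P) (ht : 0 ≤ t) (htP : t ≠ 1 + P) :
    0 < shellExponent P t := by
  have harg : 0 ≤ 1 + 4 * P * t := by positivity
  rw [shellExponent_eq (by linarith) harg]
  set s := √(1 + 4 * P * t) with hs
  have hs1 : 1 ≤ s := one_le_sqrt.mpr (by nlinarith)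
  have hau : (1 + P) * ((1 + s) / (2 * (1 + P))) = (1 + s) / 2 := by field_simp
  have hu1 : (1 + s) / (2 * (1 + P)) ≠ 1 := by
    intro hu
    rw [hu, mul_one] at hau
    have : 1 + 4 * P * t = (1 + 4 * P * (1 + P)) := by
      rw [← sq_sqrt harg, ← hs]
      nlinarith
    exact htP (mul_left_cancel₀ (by positivity : 4 * P ≠ 0) (by linarith))
  have := sub_one_sub_mul_sq_lt_log (by positivity) (by rw [hau]; linarith) hu1
  linarith

lemma shellExponent_nonneg {P t : ℝ} (hP : 0 < P) (ht : 0 ≤ t) : 0 ≤ shellExponent P t := by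
  rcases eq_or_ne t (1 + P) with rfl | htP
  · exact (shellExponent_one_add (by linarith)).ge
  · exact (shellExponent_pos hP ht htP).le

lemma shellExponent_eq_zero_iff {P t : ℝ} (hP : 0 < P) (ht : 0 ≤ t) :
    shellExponent P t = 0 ↔ t = 1 + P := by
  refine ⟨fun h => ?_, fun h => h ▸ shellExponent_one_add (by linarith)⟩
  by_contra htP
  exact (shellExponent_pos hP ht htP).ne' h

/-- The composite-shell exponent is nonnegative, and for `p ∈ (0,1)` it
vanishes exactly at `t_I = t_II = 1 + P`. -/
theorem composite_shell_exponent_nonneg (P p : ℝ) (hP : 0 < P)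
    (hp0 : 0 ≤ p) (hp1 : p ≤ 1) :
    (∀ tI tII : ℝ, 0 ≤ tI → 0 ≤ tII → 0 ≤ compositeShellExponent P p tI tII) ∧
    (0 < p → p < 1 →
      ∀ tI tII : ℝ, 0 ≤ tI → 0 ≤ tII →
        (compositeShellExponent P p tI tII = 0 ↔ tI = 1 + P ∧ tII = 1 + P)) := by
  have hq : 0 ≤ 1 - p := sub_nonneg.mpr hp1
  refine ⟨fun tI tII hI hII => ?_, fun hp hp' tI tII hI hII => ?_⟩
  · rw [compositeShellExponent_eq]
    have := shellExponent_nonneg hP hI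
    have := shellExponent_nonneg hP hII
    positivity
  · rw [compositeShellExponent_eq, add_eq_zero_iff_of_nonneg
      (mul_nonneg hp0 (shellExponent_nonneg hP hI)) (mul_nonneg hq (shellExponent_nonneg hP hII)),
      mul_eq_zero, mul_eq_zero, or_iff_right hp.ne', or_iff_right (sub_ne_zero.mpr hp'.ne'),
      shellExponent_eq_zero_iff hP hI, shellExponent_eq_zero_iff hP hII]
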